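/- Let (x_n, y_n, z_n, v_n) be the orbit of the level-3 local structure map L for rule 14 started at (x_0, y_0, z_0, v_0) = (1/2, 1/4, 1/8, 1/8). Then (x_n, y_n, z_n, v_n) converges to (1/2, 1/4, 0, 0) as n → ∞. -/

import Mathlib

/-!
After one step the orbit lies on the plane `x - 1/2 = y - 1/4 = v`, which `L` maps into
itself; in the coordinates `(a, z) = (v, z)` it acts by
`(a, z) ↦ (z - a, z - 4az(1/4 + a - z)/(1/4 + a))`. On the region `0 < a < z ≤ 7/32`, which
this map preserves, `z` drops by at least `az/2` per step, and `zₙ = aₙ + aₙ₊₁`. So the limit `c`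
of the decreasing sequence `zₙ` satisfies `c aₙ → 0`, whence `c² = lim c zₙ = 0`.
-/

open Filter

/-- Level-3 local structure map for rule 14.  In Lean, division by zero
yields zero, which matches the convention that the fraction
`v(y-z)z/(y(x-y))` is taken to be `0` whenever `y(x-y) = 0`. -/
noncomputable def L (p : ℝ × ℝ × ℝ × ℝ) : ℝ × ℝ × ℝ × ℝ :=
  match p with
  | (x, y, z, v) =>
    (-x + z + 1,
     -2 * x + y + z + 1,
     1 + z + v - 3 * x + 2 * y - v * (y - z) * z / (y * (x - y)),
     x - 2 * y + z)

open Topology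

theorem tendsto_zero_of_eq_add_succ_of_le_sub_mul {a z : ℕ → ℝ} {κ : ℝ} (hκ : 0 < κ)
    (ha : ∀ n, 0 ≤ a n) (hz : ∀ n, z n = a n + a (n + 1))
    (hdecay : ∀ n, z (n + 1) ≤ z n - κ * a n * z n) :
    Tendsto a atTop (𝓝 0) ∧ Tendsto z atTop (𝓝 0) := by
  have hz_nonneg : ∀ n, 0 ≤ z n := fun n => by linarith [hz n, ha n, ha (n + 1)]
  have hz_anti : Antitone z := antitone_nat_of_succ_le fun n => by
    nlinarith [hdecay n, mul_nonneg (mul_nonneg hκ.le (ha n)) (hz_nonneg n)]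
  have hbdd : BddBelow (Set.range z) := ⟨0, Set.forall_mem_range.2 hz_nonneg⟩
  set c := ⨅ n, z n
  have hz_lim : Tendsto z atTop (𝓝 c) := tendsto_atTop_ciInf hz_anti hbdd
  have hc : 0 ≤ c := le_ciInf hz_nonneg
  have hca : Tendsto (fun n => c * a n) atTop (𝓝 0) := by
    have hdiff : Tendsto (fun n => (z n - z (n + 1)) / κ) atTop (𝓝 0) := by
      simpa using (hz_lim.sub ((tendsto_add_atTop_iff_nat 1).2 hz_lim)).div_const κ
    refine squeeze_zero (fun n => mul_nonneg hc (ha n)) (fun n => ?_) hdiff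
    rw [le_div_iff₀ hκ]
    nlinarith [hdecay n, mul_le_mul_of_nonneg_left (ciInf_le hbdd n) (mul_nonneg hκ.le (ha n))]
  have hcz : Tendsto (fun n => c * z n) atTop (𝓝 0) := by
    simpa [hz, mul_add] using hca.add ((tendsto_add_atTop_iff_nat 1).2 hca)
  have hc0 : c = 0 := by
    simpa using tendsto_nhds_unique (hz_lim.const_mul c) hcz
  rw [hc0] at hz_lim
  exact ⟨squeeze_zero ha (fun n => by linarith [hz n, ha (n + 1)]) hz_lim, hz_lim⟩

namespace Rule14

/- The denominator is that of `L` up to a factor `1/4`, so that `semiconj_planeEmbedding` holds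
without the side condition `a ≠ -1/4`: both divisions are by zero there. -/
noncomputable def reducedMap (p : ℝ × ℝ) : ℝ × ℝ :=
  (p.2 - p.1, p.2 - 4 * p.1 * p.2 * (1/4 + p.1 - p.2) / (1/4 + p.1))

noncomputable def planeEmbedding (p : ℝ × ℝ) : ℝ × ℝ × ℝ × ℝ :=
  (1/2 + p.1, 1/4 + p.1, p.2, p.1)

theorem semiconj_planeEmbedding : Function.Semiconj planeEmbedding reducedMap L := by
  rintro ⟨a, z⟩
  simp only [planeEmbedding, reducedMap, L]
  rw [show (1/2 + a) - (1/4 + a) = (1/4 : ℝ) by ring, div_mul_eq_div_div]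
  exact Prod.ext (by ring) (Prod.ext (by ring) (Prod.ext (by ring) (by ring)))

theorem continuous_planeEmbedding : Continuous planeEmbedding := by
  unfold planeEmbedding; fun_prop

def trappingRegion : Set (ℝ × ℝ) := {p | 0 < p.1 ∧ p.1 < p.2 ∧ p.2 ≤ 7/32}

theorem reducedMap_snd_le {p : ℝ × ℝ} (hp : p ∈ trappingRegion) :
    (reducedMap p).2 ≤ p.2 - 1/2 * p.1 * p.2 := by
  obtain ⟨ha, haz, hz⟩ := hp
  simp only [reducedMap]
  rw [sub_le_sub_iff_left, le_div_iff₀ (by linarith)]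
  nlinarith [mul_pos ha (ha.trans haz)]

theorem mapsTo_trappingRegion : Set.MapsTo reducedMap trappingRegion trappingRegion := by
  intro p hp
  have ⟨ha, haz, hz⟩ := hp
  refine ⟨by simp only [reducedMap]; linarith, ?_, ?_⟩
  · simp only [reducedMap]
    rw [sub_lt_sub_iff_left, div_lt_iff₀ (by linarith)]
    nlinarith [mul_pos ha (sub_pos.mpr haz), mul_pos ha (mul_pos ha (sub_pos.mpr haz))]
  · nlinarith [reducedMap_snd_le hp, mul_pos ha (ha.trans haz)]

theorem tendsto_iterate_reducedMap {p : ℝ × ℝ} (hp : p ∈ trappingRegion) :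
    Tendsto (fun n => reducedMap^[n] p) atTop (𝓝 (0, 0)) := by
  have hmem n : reducedMap^[n] p ∈ trappingRegion := mapsTo_trappingRegion.iterate n hp
  obtain ⟨ha, hz⟩ := tendsto_zero_of_eq_add_succ_of_le_sub_mul one_half_pos
    (a := fun n => (reducedMap^[n] p).1) (z := fun n => (reducedMap^[n] p).2)
    (fun n => (hmem n).1.le)
    (fun n => by simp only [Function.iterate_succ_apply', reducedMap]; ring)
    (fun n => by simpa only [Function.iterate_succ_apply'] using reducedMap_snd_le (hmem n))
  exact ha.prodMk_nhds hz

end Rule14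

open Rule14 in
theorem local_structure_orbit_converges :
    Tendsto (fun n : ℕ => L^[n] (1/2, 1/4, 1/8, 1/8)) atTop
      (nhds ((1/2 : ℝ), (1/4 : ℝ), (0 : ℝ), (0 : ℝ))) := by
  have hstart : L (1/2, 1/4, 1/8, 1/8) = planeEmbedding (1/8, 7/32) := by
    norm_num [L, planeEmbedding]
  have horbit n :
      L^[n + 1] (1/2, 1/4, 1/8, 1/8) = planeEmbedding (reducedMap^[n] (1/8, 7/32)) := by
    rw [Function.iterate_succ_apply, hstart, (semiconj_planeEmbedding.iterate_right n).eq]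
  have hlim := (continuous_planeEmbedding.tendsto (0, 0)).comp
    (tendsto_iterate_reducedMap (p := (1/8, 7/32)) (by norm_num [trappingRegion]))
  rw [show planeEmbedding (0, 0) = (1/2, 1/4, 0, 0) by norm_num [planeEmbedding]] at hlim
  rw [← tendsto_add_atTop_iff_nat 1]
  simp only [horbit]
  exact hlim
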